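/- arXiv:2002.10128 — 4 statements merged into one kernel-verified Lean document; each statement's English description precedes it below -/
import Mathlib

section
/- With r_s defined using k = 0 (i.e. c₀ s r_s^d = log s − log log s + ξ + log(αβ/d)), one has lim_{s→∞} s ∫₁^∞ exp(−c₀ s r_s^d · w^{d/α}) β w^{−β−1} dw = e^{−ξ}. -/
open MeasureTheory Filter Set Real Topology

/-! Substituting `u = w ^ γ` and then `u = 1 + t / L` gives
`paretoLaplace β γ L = (β / γ) (e^{-L} / L) ∫₀^∞ e^{-t} (1 + t / L)^{-(β/γ + 1)} dt`,
and the last integral tends to `1` by dominated convergence, so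
`paretoLaplace β γ L ~ (β / γ) e^{-L} / L`. For `γ = d / α` and
`L = log s - log log s + ξ + log (β / γ)` we have `s e^{-L} = (γ / β) e^{-ξ} log s` and
`L ~ log s`, whence `s · paretoLaplace β γ L → e^{-ξ}`. -/

lemma tendsto_integral_exp_neg_mul_one_add_div_rpow {a : ℝ} (ha : 0 ≤ a) :
    Tendsto (fun L : ℝ => ∫ t in Ioi 0, exp (-t) * (1 + t / L) ^ (-a)) atTop (𝓝 1) := by
  have hbound : IntegrableOn (fun t : ℝ => exp (-t)) (Ioi 0) := by
    simpa using exp_neg_integrableOn_Ioi 0 one_pos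
  have hlim := tendsto_integral_filter_of_dominated_convergence (l := atTop)
    (μ := volume.restrict (Ioi 0)) (F := fun L t => exp (-t) * (1 + t / L) ^ (-a))
    (f := fun t => exp (-t)) (fun t => exp (-t)) ?_ ?_ hbound ?_
  · rwa [integral_exp_neg_Ioi_zero] at hlim
  · exact Eventually.of_forall fun L => by fun_prop
  · filter_upwards [eventually_gt_atTop 0] with L hL
    filter_upwards [ae_restrict_mem measurableSet_Ioi] with t ht
    have hbase : 1 ≤ 1 + t / L := le_add_of_nonneg_right (div_pos ht hL).le
    rw [norm_mul, norm_of_nonneg (exp_pos _).le,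
      norm_of_nonneg (rpow_nonneg (zero_le_one.trans hbase) _)]
    exact mul_le_of_le_one_right (exp_pos _).le
      (rpow_le_one_of_one_le_of_nonpos hbase (neg_nonpos.2 ha))
  · refine ae_of_all _ fun t => ?_
    have h : Tendsto (fun L : ℝ => 1 + t / L) atTop (𝓝 1) := by
      simpa using (tendsto_const_nhds (x := (1 : ℝ))).add
        ((tendsto_const_nhds (x := t)).div_atTop tendsto_id)
    simpa using tendsto_const_nhds.mul (h.rpow_const (Or.inl one_ne_zero))

lemma integral_Ioi_eq_inv_mul_integral_Ioi_zero_comp_add_div (g : ℝ → ℝ) (a : ℝ) {c : ℝ}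
    (hc : 0 < c) : ∫ u in Ioi a, g u = c⁻¹ * ∫ t in Ioi 0, g (a + t / c) := by
  have himage : (fun t => a + t / c) '' Ioi 0 = Ioi a := by
    ext u
    simp only [mem_image, mem_Ioi]
    constructor
    · rintro ⟨t, ht, rfl⟩
      exact lt_add_of_pos_right a (div_pos ht hc)
    · exact fun hu => ⟨(u - a) * c, mul_pos (sub_pos.2 hu) hc, by field_simp; ring⟩
  rw [← himage, integral_image_eq_integral_abs_deriv_smul (f := fun t => a + t / c)
    (f' := fun _ => 1 / c) measurableSet_Ioi
    (fun t _ => (((hasDerivAt_id' t).div_const c).const_add a).hasDerivWithinAt)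
    (fun x _ y _ h => by simpa [hc.ne'] using h), ← integral_const_mul]
  simp [abs_of_pos hc]

lemma integral_Ioi_one_comp_rpow_mul_rpow (g : ℝ → ℝ) {γ : ℝ} (hγ : 0 < γ) (β : ℝ) :
    ∫ w in Ioi 1, g (w ^ γ) * w ^ (-β - 1) =
      γ⁻¹ * ∫ u in Ioi 1, g u * u ^ (-(β / γ + 1)) := by
  rw [← integral_const_mul, ← integral_comp_rpow_Ioi_of_pos' hγ zero_le_one
    (g := fun u => γ⁻¹ * (g u * u ^ (-(β / γ + 1)))), one_rpow]
  refine setIntegral_congr_fun measurableSet_Ioi fun w hw => ?_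
  have hw0 : 0 < w := one_pos.trans hw
  have hpow : w ^ (-β - 1) = w ^ (γ - 1) * w ^ (γ * -(β / γ + 1)) := by
    rw [← rpow_add hw0]; congr 1; field_simp; ring
  simp only [smul_eq_mul, ← rpow_mul hw0.le, hpow]
  field_simp

noncomputable def paretoLaplace (β γ L : ℝ) : ℝ :=
  ∫ w in Ioi 1, exp (-(L * w ^ γ)) * (β * w ^ (-β - 1))

lemma paretoLaplace_eq {β γ L : ℝ} (hγ : 0 < γ) (hL : 0 < L) :
    paretoLaplace β γ L =
      β / γ * (exp (-L) / L) * ∫ t in Ioi 0, exp (-t) * (1 + t / L) ^ (-(β / γ + 1)) := by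
  have hexp : ∀ t, exp (-(L * (1 + t / L))) = exp (-L) * exp (-t) := fun t => by
    rw [← exp_add]; congr 1; field_simp; ring
  simp_rw [paretoLaplace, mul_left_comm _ β, integral_const_mul]
  rw [integral_Ioi_one_comp_rpow_mul_rpow (fun u => exp (-(L * u))) hγ β,
    integral_Ioi_eq_inv_mul_integral_Ioi_zero_comp_add_div _ 1 hL]
  simp_rw [hexp, mul_assoc, integral_const_mul]
  field_simp

lemma tendsto_mul_exp_mul_paretoLaplace {β γ : ℝ} (hβ : 0 ≤ β) (hγ : 0 < γ) :
    Tendsto (fun L => L * exp L * paretoLaplace β γ L) atTop (𝓝 (β / γ)) := by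
  have hlim := (tendsto_integral_exp_neg_mul_one_add_div_rpow
    (a := β / γ + 1) (by positivity)).const_mul (β / γ)
  rw [mul_one] at hlim
  refine hlim.congr' ?_
  filter_upwards [eventually_gt_atTop 0] with L hL
  rw [paretoLaplace_eq hγ hL, exp_neg]
  field_simp

lemma tendsto_log_sub_log_log_add_div_log (c : ℝ) :
    Tendsto (fun s => (log s - log (log s) + c) / log s) atTop (𝓝 1) := by
  have hloglog : Tendsto (fun s => log (log s) / log s) atTop (𝓝 0) :=
    isLittleO_log_id_atTop.tendsto_div_nhds_zero.comp tendsto_log_atTop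
  have hconst : Tendsto (fun s => c / log s) atTop (𝓝 0) :=
    tendsto_const_nhds.div_atTop tendsto_log_atTop
  have hlim := ((tendsto_const_nhds (x := (1 : ℝ))).sub hloglog).add hconst
  rw [sub_zero, add_zero] at hlim
  refine hlim.congr' ?_
  filter_upwards [eventually_gt_atTop 1] with s hs
  field_simp [(log_pos hs).ne']

lemma mul_exp_neg_log_sub_log_log_add {s : ℝ} (hs : 1 < s) (c : ℝ) :
    s * exp (-(log s - log (log s) + c)) = log s * exp (-c) := by
  rw [show -(log s - log (log s) + c) = -log s + log (log s) + -c by ring, exp_add, exp_add,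
    exp_neg, exp_log (by linarith), exp_log (log_pos hs)]
  field_simp

lemma tendsto_mul_comp_log_sub_log_log_add {f : ℝ → ℝ} {A : ℝ} (c : ℝ)
    (hf : Tendsto (fun L => L * exp L * f L) atTop (𝓝 A)) :
    Tendsto (fun s => s * f (log s - log (log s) + c)) atTop (𝓝 (A * exp (-c))) := by
  set L : ℝ → ℝ := fun s => log s - log (log s) + c
  have hratio : Tendsto (fun s => L s / log s) atTop (𝓝 1) :=
    tendsto_log_sub_log_log_add_div_log c
  have hL : Tendsto L atTop atTop := by
    refine (hratio.pos_mul_atTop one_pos tendsto_log_atTop).congr' ?_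
    filter_upwards [eventually_gt_atTop 1] with s hs
    exact div_mul_cancel₀ _ (log_pos hs).ne'
  have hlim := (hf.comp hL).mul
    ((tendsto_const_nhds (x := exp (-c))).mul (hratio.inv₀ one_ne_zero))
  rw [inv_one, mul_one] at hlim
  refine hlim.congr' ?_
  filter_upwards [eventually_gt_atTop 1, hL.eventually_gt_atTop 0] with s hs hLs
  have hmul : s * exp (-L s) = log s * exp (-c) := mul_exp_neg_log_sub_log_log_add hs c
  rw [Function.comp_apply, inv_div, ← mul_div_assoc, mul_comm (exp (-c)), ← hmul, exp_neg]
  field_simp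
  rfl

lemma mul_pow_eq_of_pow_eq_one_div_mul {a x y : ℝ} {d : ℕ} (hx : 0 < x)
    (h : x ^ d = 1 / a * y) : a * x ^ d = y := by
  -- `a = 0` would make the right-hand side of `h` vanish, as `1 / 0 = 0`.
  have ha : a ≠ 0 := fun ha => by
    rw [ha, div_zero, zero_mul] at h
    exact (pow_pos hx d).ne' h
  rw [h, ← mul_assoc, mul_one_div_cancel ha, one_mul]

theorem isolated_nodes_mean_tendsto_general
    (d : ℕ) (hd : 1 ≤ d) (α β ξ : ℝ)
    (hα : 0 < α) (hβ : 0 < β)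
    (c₀ : ℝ)
    (r : ℝ → ℝ)
    (hr : ∀ᶠ s in atTop, 0 < r s ∧
      r s ^ d = (1 / (c₀ * s)) *
        (Real.log s - Real.log (Real.log s) + ξ + Real.log (α * β / d))) :
    Tendsto (fun s : ℝ =>
        s * ∫ w in Ioi (1 : ℝ),
          Real.exp (-(c₀ * s * r s ^ d * w ^ ((d : ℝ) / α))) * (β * w ^ (-β - 1)))
      atTop (nhds (Real.exp (-ξ))) := by
  have hd0 : (0 : ℝ) < d := by exact_mod_cast hd
  have hlim := tendsto_mul_comp_log_sub_log_log_add (ξ + log (α * β / d))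
    (tendsto_mul_exp_mul_paretoLaplace hβ.le (div_pos hd0 hα))
  have hvalue : β / (d / α) * exp (-(ξ + log (α * β / d))) = exp (-ξ) := by
    rw [exp_neg, exp_add, exp_log (by positivity), exp_neg]
    field_simp
  rw [hvalue] at hlim
  refine hlim.congr' ?_
  filter_upwards [hr] with s ⟨hrpos, hrd⟩
  rw [← add_assoc, ← mul_pow_eq_of_pow_eq_one_div_mul hrpos hrd]
  rfl

theorem isolated_nodes_mean_tendsto
    (d : ℕ) (hd : 1 ≤ d) (α β η ξ : ℝ)
    (hα : 0 < α) (hβ : 0 < β) (hη : 0 < η)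
    (hαd : (d : ℝ) < α) (hβ1 : 1 < β)
    (c₀ : ℝ)
    (hc₀ : c₀ = (volume (Metric.closedBall (0 : EuclideanSpace ℝ (Fin d)) 1)).toReal *
      (α * β / (α * β - d)) * η ^ ((d : ℝ) / α) * Real.Gamma (1 - (d : ℝ) / α))
    (r : ℝ → ℝ)
    (hr : ∀ᶠ s in atTop, 0 < r s ∧
      r s ^ d = (1 / (c₀ * s)) *
        (Real.log s - Real.log (Real.log s) + ξ + Real.log (α * β / d))) :
    Tendsto (fun s : ℝ =>
        s * ∫ w in Ioi (1 : ℝ),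
          Real.exp (-(c₀ * s * r s ^ d * w ^ ((d : ℝ) / α))) * (β * w ^ (-β - 1)))
      atTop (nhds (Real.exp (-ξ))) :=
  isolated_nodes_mean_tendsto_general d hd α β ξ hα hβ c₀ r hr
end

section
/- Let k ≥ 1 be an integer and suppose α > d. With r_s defined by the scaling for this k, one has lim_{s→∞} (s/k!) ∫₁^∞ ( s r_s^d · Λ_s(w) )^k · exp(−c₀ s r_s^d · w^{d/α}) · β w^{−β−1} dw = e^{−ξ}. -/
/-!
Substituting `w = (1 + u / t) ^ (α / d)` with `t = c₀ s r_s^d` turns the exponent into `t + u`, and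
the integral splits as `(αβ/d) t^(k-1) e^(-t)` times an integral over `u > 0` whose integrand tends
to `e^(-u)`, dominated by `e^(-u/2)`, since `t → ∞` and `r_s → 0`. The choice of `r_s` is exactly
what makes `(s/k!) (αβ/d) t^(k-1) e^(-t) = e^(-ξ) (t / log s)^(k-1)`, and `t ~ log s`.
-/

open MeasureTheory Filter Set Topology

section
open Real

lemma image_one_add_div_rpow_Ioi {t q : ℝ} (ht : 0 < t) (hq : 0 < q) :
    (fun u : ℝ => (1 + u / t) ^ q) '' Ioi 0 = Ioi 1 := by
  ext w
  simp only [mem_image, mem_Ioi]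
  constructor
  · rintro ⟨u, hu, rfl⟩
    exact one_lt_rpow (by linarith [div_pos hu ht]) hq
  · intro hw
    have hw' : 1 < w ^ q⁻¹ := one_lt_rpow hw (inv_pos.2 hq)
    refine ⟨t * (w ^ q⁻¹ - 1), mul_pos ht (by linarith), ?_⟩
    rw [mul_div_cancel_left₀ _ ht.ne', add_sub_cancel, ← rpow_mul (by linarith),
      inv_mul_cancel₀ hq.ne', rpow_one]

theorem integral_comp_one_add_div_rpow_Ioi (g : ℝ → ℝ) {t q : ℝ} (ht : 0 < t) (hq : 0 < q) :
    ∫ u in Ioi 0, q / t * (1 + u / t) ^ (q - 1) * g ((1 + u / t) ^ q) = ∫ w in Ioi 1, g w := by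
  have hbase : ∀ u ∈ Ioi (0 : ℝ), 0 < 1 + u / t := fun u hu => by
    linarith [div_pos (mem_Ioi.1 hu) ht]
  have hderiv : ∀ u ∈ Ioi (0 : ℝ), HasDerivWithinAt (fun u : ℝ => (1 + u / t) ^ q)
      (q / t * (1 + u / t) ^ (q - 1)) (Ioi 0) u := fun u hu => by
    refine ((((hasDerivAt_id' u).div_const t).const_add 1).rpow_const
      (Or.inl (hbase u hu).ne')).hasDerivWithinAt.congr_deriv ?_
    ring
  have hmono : StrictMonoOn (fun u : ℝ => (1 + u / t) ^ q) (Ioi 0) := fun a ha b _ hab =>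
    rpow_lt_rpow (hbase a ha).le (by gcongr) hq
  rw [← image_one_add_div_rpow_Ioi ht hq,
    integral_image_eq_integral_abs_deriv_smul measurableSet_Ioi hderiv hmono.injOn g]
  refine setIntegral_congr_fun measurableSet_Ioi fun u hu => ?_
  rw [abs_of_nonneg (by have := hbase u hu; positivity), smul_eq_mul]

theorem integral_Ioi_one_max_pow_mul_exp_eq (k : ℕ) {c x p : ℝ} (ρ β : ℝ) (hc : 0 < c)
    (hx : 0 < x) (hp : 0 < p) :
    ∫ w in Ioi 1, (x * max 0 (c * w ^ p - ρ * w)) ^ k * exp (-(c * x * w ^ p)) *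
        (β * w ^ (-β - 1)) =
      β / p * ((c * x) ^ k / (c * x)) * exp (-(c * x)) *
        ∫ u in Ioi 0, (max 0 (1 + u / (c * x) - ρ / c * (1 + u / (c * x)) ^ p⁻¹)) ^ k *
          exp (-u) * (1 + u / (c * x)) ^ (-β / p - 1) := by
  have ht : 0 < c * x := mul_pos hc hx
  rw [← integral_comp_one_add_div_rpow_Ioi _ ht (inv_pos.2 hp), ← integral_const_mul]
  refine setIntegral_congr_fun measurableSet_Ioi fun u hu => ?_
  set b := 1 + u / (c * x) with hb_def
  have hb : 0 < b := by linarith [div_pos (mem_Ioi.1 hu) ht]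
  have hbw : (b ^ p⁻¹) ^ p = b := by rw [← rpow_mul hb.le, inv_mul_cancel₀ hp.ne', rpow_one]
  have hmax : x * max 0 (c * b - ρ * b ^ p⁻¹) = c * x * max 0 (b - ρ / c * b ^ p⁻¹) := by
    rw [mul_max_of_nonneg _ _ hx.le, mul_max_of_nonneg _ _ ht.le]
    congr 1
    · simp
    · field_simp
  have hexp : c * x * b = c * x + u := by rw [hb_def]; field_simp
  have hpow : b ^ (-β / p - 1) = b ^ (p⁻¹ - 1) * (b ^ p⁻¹) ^ (-β - 1) := by
    rw [← rpow_mul hb.le, ← rpow_add hb]; ring_nf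
  simp only [hbw, hmax, hexp, hpow, mul_pow, neg_add, exp_add]
  field_simp

lemma mul_rpow_mul_exp_neg_log_add {s t : ℝ} (a ξ : ℝ) {C : ℝ} (hs : 1 < s) (ht : 0 < t)
    (hC : 0 < C) :
    s * t ^ a * exp (-(log s + a * log (log s) + (ξ + log C))) =
      exp (-ξ) / C * (t / log s) ^ a := by
  have hl : 0 < log s := log_pos hs
  rw [div_rpow ht.le hl.le,
    show -(log s + a * log (log s) + (ξ + log C)) = -log s + log (log s) * -a + -ξ + -log C by
      ring,
    exp_add, exp_add, exp_add, exp_neg (log s), exp_log (by linarith), exp_neg (log C),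
    exp_log hC, ← rpow_def_of_pos hl, rpow_neg hl.le]
  field_simp

theorem div_factorial_mul_integral_Ioi_one_eq (k : ℕ) {s c x p : ℝ} (ρ β ξ : ℝ) (hs : 1 < s)
    (hc : 0 < c) (hx : 0 < x) (hp : 0 < p) (hβ : 0 < β)
    (hcx : c * x = log s + (k - 1) * log (log s) + (ξ + log (β / p / k.factorial))) :
    s / k.factorial * ∫ w in Ioi 1, (x * max 0 (c * w ^ p - ρ * w)) ^ k *
        exp (-(c * x * w ^ p)) * (β * w ^ (-β - 1)) =
      exp (-ξ) * ((c * x / log s) ^ ((k : ℝ) - 1) *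
        ∫ u in Ioi 0, (max 0 (1 + u / (c * x) - ρ / c * (1 + u / (c * x)) ^ p⁻¹)) ^ k *
          exp (-u) * (1 + u / (c * x)) ^ (-β / p - 1)) := by
  have ht : 0 < c * x := mul_pos hc hx
  have hC : 0 < β / p / k.factorial := by positivity
  have hprefactor := mul_rpow_mul_exp_neg_log_add ((k : ℝ) - 1) ξ hs ht hC
  rw [← hcx] at hprefactor
  rw [integral_Ioi_one_max_pow_mul_exp_eq k ρ β hc hx hp, ← rpow_natCast (c * x) k,
    ← rpow_sub_one ht.ne', ← mul_assoc (exp _), ← mul_assoc (s / _)]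
  congr 1
  rw [show s / k.factorial * (β / p * (c * x) ^ ((k : ℝ) - 1) * exp (-(c * x))) =
    β / p / k.factorial * (s * (c * x) ^ ((k : ℝ) - 1) * exp (-(c * x))) by ring, hprefactor]
  field_simp

lemma one_add_div_pow_le_exp_half (k : ℕ) {T u : ℝ} (hT : 0 < T) (hkT : 2 * k ≤ T)
    (hu : 0 ≤ u) : (1 + u / T) ^ k ≤ exp (u / 2) :=
  calc (1 + u / T) ^ k
      ≤ exp (u / T) ^ k := by gcongr; linarith [add_one_le_exp (u / T)]
    _ = exp (k * u / T) := by rw [← exp_nat_mul, mul_div_assoc]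
    _ ≤ exp (u / 2) := by
        rw [exp_le_exp, div_le_div_iff₀ hT two_pos]
        nlinarith

lemma norm_max_pow_mul_exp_le (k : ℕ) {T E q e u : ℝ} (hT : 0 < T) (hkT : 2 * k ≤ T)
    (hE : 0 ≤ E) (he : e ≤ 0) (hu : 0 ≤ u) :
    ‖(max 0 (1 + u / T - E * (1 + u / T) ^ q)) ^ k * exp (-u) * (1 + u / T) ^ e‖ ≤
      exp (-(1 / 2) * u) := by
  have hb : 1 ≤ 1 + u / T := le_add_of_nonneg_right (div_nonneg hu hT.le)
  have hmax : max 0 (1 + u / T - E * (1 + u / T) ^ q) ≤ 1 + u / T :=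
    max_le (by linarith) (sub_le_self _ (mul_nonneg hE (rpow_nonneg (by linarith) _)))
  rw [Real.norm_of_nonneg (by positivity)]
  calc (max 0 (1 + u / T - E * (1 + u / T) ^ q)) ^ k * exp (-u) * (1 + u / T) ^ e
      ≤ exp (u / 2) * exp (-u) * 1 := by
        gcongr
        · exact (pow_le_pow_left₀ (le_max_left _ _) hmax k).trans
            (one_add_div_pow_le_exp_half k hT hkT hu)
        · exact rpow_le_one_of_one_le_of_nonpos hb he
    _ = exp (-(1 / 2) * u) := by rw [mul_one, ← exp_add]; ring_nf

theorem tendsto_integral_Ioi_max_pow_mul_exp {ι : Type*} {l : Filter ι} [l.IsCountablyGenerated]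
    (k : ℕ) {q e : ℝ} (he : e ≤ 0) {T E : ι → ℝ} (hT : Tendsto T l atTop)
    (hE : Tendsto E l (𝓝 0)) (hE0 : ∀ᶠ i in l, 0 ≤ E i) :
    Tendsto (fun i => ∫ u in Ioi 0, (max 0 (1 + u / T i - E i * (1 + u / T i) ^ q)) ^ k *
      exp (-u) * (1 + u / T i) ^ e) l (𝓝 1) := by
  have hmeas : ∀ᶠ i in l, AEStronglyMeasurable (fun u => (max 0 (1 + u / T i -
      E i * (1 + u / T i) ^ q)) ^ k * exp (-u) * (1 + u / T i) ^ e) (volume.restrict (Ioi 0)) := by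
    filter_upwards [hT.eventually_gt_atTop 0] with i hTi
    have hb : ContinuousOn (fun u : ℝ => 1 + u / T i) (Ioi 0) := by fun_prop
    have hb0 : ∀ u ∈ Ioi (0 : ℝ), 1 + u / T i ≠ 0 := fun u hu =>
      (by linarith [div_pos (mem_Ioi.1 hu) hTi] : (0 : ℝ) < 1 + u / T i).ne'
    refine ContinuousOn.aestronglyMeasurable ?_ measurableSet_Ioi
    exact (((continuousOn_const.sup (hb.sub (continuousOn_const.mul
      (hb.rpow_const fun u hu => Or.inl (hb0 u hu))))).pow k).mul (by fun_prop)).mul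
      (hb.rpow_const fun u hu => Or.inl (hb0 u hu))
  have hbound : ∀ᶠ i in l, ∀ᵐ u ∂volume.restrict (Ioi 0), ‖(max 0 (1 + u / T i -
      E i * (1 + u / T i) ^ q)) ^ k * exp (-u) * (1 + u / T i) ^ e‖ ≤ exp (-(1 / 2) * u) := by
    filter_upwards [hT.eventually_gt_atTop 0, hT.eventually_ge_atTop (2 * k), hE0]
      with i hTi hkT hEi
    filter_upwards [ae_restrict_mem measurableSet_Ioi] with u hu
    exact norm_max_pow_mul_exp_le k hTi hkT hEi he (le_of_lt hu)
  have hlim : ∀ u, Tendsto (fun i => (max 0 (1 + u / T i - E i * (1 + u / T i) ^ q)) ^ k *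
      exp (-u) * (1 + u / T i) ^ e) l (𝓝 (exp (-u))) := fun u => by
    have hb : Tendsto (fun i => 1 + u / T i) l (𝓝 1) := by
      simpa using tendsto_const_nhds.add (tendsto_const_nhds.div_atTop hT)
    have hbq := hb.rpow_const (p := q) (Or.inl one_ne_zero)
    have hbe := hb.rpow_const (p := e) (Or.inl one_ne_zero)
    simpa using (((tendsto_const_nhds (x := (0 : ℝ))).max (hb.sub (hE.mul hbq))).pow k
      |>.mul_const (exp (-u))).mul hbe
  have := tendsto_integral_filter_of_dominated_convergence _ hmeas hbound
    (exp_neg_integrableOn_Ioi 0 (by norm_num)) (ae_of_all _ hlim)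
  rwa [integral_exp_neg_Ioi_zero] at this

lemma tendsto_log_div_self_atTop : Tendsto (fun s => log s / s) atTop (𝓝 0) := by
  simpa using isLittleO_log_id_atTop.tendsto_div_nhds_zero

lemma tendsto_log_add_mul_log_log_div_log (a b : ℝ) :
    Tendsto (fun s => (log s + a * log (log s) + b) / log s) atTop (𝓝 1) := by
  have hloglog : Tendsto (fun s => log (log s) / log s) atTop (𝓝 0) :=
    tendsto_log_div_self_atTop.comp tendsto_log_atTop
  have h := (tendsto_const_nhds (x := (1 : ℝ))).add ((hloglog.const_mul a).add
    ((tendsto_const_nhds (x := b)).div_atTop tendsto_log_atTop))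
  rw [mul_zero, add_zero, add_zero] at h
  refine h.congr' ?_
  filter_upwards [tendsto_log_atTop.eventually_gt_atTop 0] with s hs
  field_simp
  ring

lemma tendsto_log_add_mul_log_log_atTop (a b : ℝ) :
    Tendsto (fun s => log s + a * log (log s) + b) atTop atTop := by
  refine (tendsto_log_atTop.atTop_mul_pos one_pos
    (tendsto_log_add_mul_log_log_div_log a b)).congr' ?_
  filter_upwards [tendsto_log_atTop.eventually_gt_atTop 0] with s hs
  field_simp

lemma tendsto_log_add_mul_log_log_div_self (a b : ℝ) :
    Tendsto (fun s => (log s + a * log (log s) + b) / s) atTop (𝓝 0) := by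
  have h := (tendsto_log_add_mul_log_log_div_log a b).mul tendsto_log_div_self_atTop
  rw [one_mul] at h
  refine h.congr' ?_
  filter_upwards [tendsto_log_atTop.eventually_gt_atTop 0] with s hs
  field_simp

lemma tendsto_rpow_nhds_zero_of_mul_pow_eq {r : ℝ → ℝ} {n : ℕ} (hn : n ≠ 0) {c a b e : ℝ}
    (hc : c ≠ 0) (he : 0 < e)
    (hr : ∀ᶠ s in atTop, 0 ≤ r s ∧ c * (s * r s ^ n) = log s + a * log (log s) + b) :
    Tendsto (fun s => r s ^ e) atTop (𝓝 0) := by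
  have hn' : (0 : ℝ) < n := by positivity
  have hpow : Tendsto (fun s => r s ^ n) atTop (𝓝 0) := by
    have := (tendsto_log_add_mul_log_log_div_self a b).div_const c
    rw [zero_div] at this
    refine this.congr' ?_
    filter_upwards [hr, eventually_gt_atTop 0] with s ⟨_, hrs⟩ hs
    rw [← hrs]
    field_simp
  have h := hpow.rpow_const (p := e / n) (Or.inr (by positivity))
  rw [zero_rpow (by positivity)] at h
  refine h.congr' ?_
  filter_upwards [hr] with s ⟨hs, _⟩
  rw [← rpow_natCast, ← rpow_mul hs, mul_div_cancel₀ _ hn'.ne']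

end

theorem lower_bound_degree_k_tendsto_general
    (d k : ℕ) (hd : 1 ≤ d) (α β η ξ : ℝ)
    (hη : 0 < η)
    (hαd : (d : ℝ) < α) (hβ1 : 1 < β)
    (c₀ c₃ : ℝ)
    (hc₀ : c₀ = (volume (Metric.closedBall (0 : EuclideanSpace ℝ (Fin d)) 1)).toReal *
      (α * β / (α * β - d)) * η ^ ((d : ℝ) / α) * Real.Gamma (1 - (d : ℝ) / α))
    (hc₃ : c₃ = (volume (Metric.closedBall (0 : EuclideanSpace ℝ (Fin d)) 1)).toReal *
      α * η * β ^ 2 * 2 ^ (α - (d : ℝ)) / ((β - 1) * (α - d)))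
    (r : ℝ → ℝ)
    (hr : ∀ᶠ s in atTop, 0 < r s ∧
      r s ^ d = (1 / (c₀ * s)) *
        (Real.log s + ((k : ℝ) - 1) * Real.log (Real.log s) + ξ +
          Real.log (α * β / ((k.factorial : ℝ) * d))))
    (Λ : ℝ → ℝ → ℝ)
    (hΛ : ∀ s w, Λ s w = max 0 (c₀ * w ^ ((d : ℝ) / α) - c₃ * w * r s ^ (α - (d : ℝ)))) :
    Tendsto (fun s : ℝ =>
        (s / (k.factorial : ℝ)) *
          ∫ w in Ioi (1 : ℝ),
            (s * r s ^ d * Λ s w) ^ k *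
              Real.exp (-(c₀ * s * r s ^ d * w ^ ((d : ℝ) / α))) * (β * w ^ (-β - 1)))
      atTop (nhds (Real.exp (-ξ))) := by
  have hd0 : (0 : ℝ) < d := by exact_mod_cast hd
  have hα : 0 < α := hd0.trans hαd
  have hc0 : 0 < c₀ := by
    have := ENNReal.toReal_pos (Metric.measure_closedBall_pos volume (0 : EuclideanSpace ℝ (Fin d))
      one_pos).ne' measure_closedBall_lt_top.ne
    have : 0 < α * β - d := by nlinarith
    have := Real.Gamma_pos_of_pos (sub_pos.2 ((div_lt_one hα).2 hαd))
    rw [hc₀]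
    positivity
  have hc3 : 0 ≤ c₃ := by
    have : 0 < (β - 1) * (α - d) := mul_pos (by linarith) (by linarith)
    rw [hc₃]
    positivity
  set b := ξ + Real.log (β / (d / α) / k.factorial) with hb
  have hrt : ∀ᶠ s in atTop, 0 < r s ∧
      c₀ * (s * r s ^ d) = Real.log s + ((k : ℝ) - 1) * Real.log (Real.log s) + b := by
    filter_upwards [hr, eventually_gt_atTop 0] with s ⟨hrs, hrd⟩ hs
    refine ⟨hrs, ?_⟩
    rw [hrd, hb, show β / (d / α) / k.factorial = α * β / (k.factorial * d) by field_simp]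
    field_simp
    ring
  have hE := ((tendsto_rpow_nhds_zero_of_mul_pow_eq (by omega) hc0.ne' (sub_pos.2 hαd)
    (hrt.mono fun s hs => ⟨hs.1.le, hs.2⟩)).const_mul c₃).div_const c₀
  rw [mul_zero, zero_div] at hE
  have hI := tendsto_integral_Ioi_max_pow_mul_exp k (q := (d / α : ℝ)⁻¹) (e := -β / (d / α) - 1)
    (by rw [neg_div]; linarith [show 0 < β / (d / α) by positivity])
    (tendsto_log_add_mul_log_log_atTop ((k : ℝ) - 1) b) hE
    (hr.mono fun s hs => by have := hs.1; positivity)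
  have hR := (tendsto_log_add_mul_log_log_div_log ((k : ℝ) - 1) b).rpow_const
    (p := (k : ℝ) - 1) (Or.inl one_ne_zero)
  have hlim := (hR.mul hI).const_mul (Real.exp (-ξ))
  rw [Real.one_rpow, mul_one, mul_one] at hlim
  refine hlim.congr' ?_
  filter_upwards [hrt, eventually_gt_atTop 1] with s ⟨hrs, hts⟩ hs
  have hΛs : ∀ w, Λ s w = max 0 (c₀ * w ^ ((d : ℝ) / α) - c₃ * r s ^ (α - d) * w) :=
    fun w => by rw [hΛ, mul_right_comm]
  simp_rw [hΛs, mul_assoc c₀ s]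
  rw [div_factorial_mul_integral_Ioi_one_eq k _ β ξ hs hc0 (by positivity) (by positivity)
    (by linarith) hts, hts]

theorem lower_bound_degree_k_tendsto
    (d k : ℕ) (hd : 1 ≤ d) (hk : 1 ≤ k) (α β η ξ : ℝ)
    (hα : 0 < α) (hβ : 0 < β) (hη : 0 < η)
    (hαd : (d : ℝ) < α) (hβ1 : 1 < β)
    (c₀ c₃ : ℝ)
    (hc₀ : c₀ = (volume (Metric.closedBall (0 : EuclideanSpace ℝ (Fin d)) 1)).toReal *
      (α * β / (α * β - d)) * η ^ ((d : ℝ) / α) * Real.Gamma (1 - (d : ℝ) / α))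
    (hc₃ : c₃ = (volume (Metric.closedBall (0 : EuclideanSpace ℝ (Fin d)) 1)).toReal *
      α * η * β ^ 2 * 2 ^ (α - (d : ℝ)) / ((β - 1) * (α - d)))
    (r : ℝ → ℝ)
    (hr : ∀ᶠ s in atTop, 0 < r s ∧
      r s ^ d = (1 / (c₀ * s)) *
        (Real.log s + ((k : ℝ) - 1) * Real.log (Real.log s) + ξ +
          Real.log (α * β / ((k.factorial : ℝ) * d))))
    (Λ : ℝ → ℝ → ℝ)
    (hΛ : ∀ s w, Λ s w = max 0 (c₀ * w ^ ((d : ℝ) / α) - c₃ * w * r s ^ (α - (d : ℝ)))) :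
    Tendsto (fun s : ℝ =>
        (s / (k.factorial : ℝ)) *
          ∫ w in Ioi (1 : ℝ),
            (s * r s ^ d * Λ s w) ^ k *
              Real.exp (-(c₀ * s * r s ^ d * w ^ ((d : ℝ) / α))) * (β * w ^ (-β - 1)))
      atTop (nhds (Real.exp (-ξ))) :=
  lower_bound_degree_k_tendsto_general d k hd α β η ξ hη hαd hβ1 c₀ c₃ hc₀ hc₃ r hr Λ hΛ
end

section
/- Let d ≥ 1 be an integer and let α, β, c > 0 satisfy α > d and αβ > d. Then ∫_{ℝ^d} ∫₁^∞ (1 − exp(−c w / ‖x‖^α)) β w^{−β−1} dw dx = θ_d · (αβ/(αβ − d)) · c^{d/α} · Γ(1 − d/α), where θ_d is the Lebesgue volume of the unit Euclidean ball in ℝ^d. (For d = 2, θ_2 = π and the constant equals the paper's c₀/η^{d/α} = 2παβ/(d(αβ−d)) Γ(1−d/α) with c = η w₀, i.e. the integral equals c₀ w₀^{d/α}.) -/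
/-!
In polar coordinates the `x`-integral, for fixed `w`, becomes
`d θ_d ∫₀^∞ r^(d-1) (1 - exp (-c w / r^α)) dr`. The substitution `t = c w r^(-α)` turns this into
`θ_d (c w)^(d/α) (d/α) ∫₀^∞ t^(-d/α-1) (1 - exp (-t)) dt`, and an integration by parts evaluates
the last integral as `Γ(1 - d/α) / (d/α)`. The result grows like `w^(d/α)`, so since `αβ > d`
Fubini applies, and the Pareto moment `∫₁^∞ w^(d/α) β w^(-β-1) dw = β / (β - d/α)` concludes.
-/

open MeasureTheory Set Real Filter Topology Module

lemma one_sub_exp_neg_nonneg {t : ℝ} (ht : 0 ≤ t) : 0 ≤ 1 - exp (-t) :=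
  sub_nonneg.2 (exp_le_one_iff.2 (neg_nonpos.2 ht))

lemma one_sub_exp_neg_le (t : ℝ) : 1 - exp (-t) ≤ t := by
  linarith [one_sub_le_exp_neg t]

lemma one_sub_exp_neg_le_one (t : ℝ) : 1 - exp (-t) ≤ 1 := by
  linarith [exp_pos (-t)]

section Kernel

variable {s : ℝ}

lemma integrableOn_one_sub_exp_neg_mul_rpow (hs₀ : 0 < s) (hs₁ : s < 1) :
    IntegrableOn (fun t : ℝ ↦ (1 - exp (-t)) * t ^ (-s - 1)) (Ioi 0) := by
  have hmeas : AEStronglyMeasurable (fun t : ℝ ↦ (1 - exp (-t)) * t ^ (-s - 1)) :=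
    (by fun_prop : Measurable _).aestronglyMeasurable
  have hnorm : ∀ t : ℝ, 0 < t →
      ‖(1 - exp (-t)) * t ^ (-s - 1)‖ = (1 - exp (-t)) * t ^ (-s - 1) := fun t ht ↦
    norm_of_nonneg (mul_nonneg (one_sub_exp_neg_nonneg ht.le) (by positivity))
  rw [← Ioc_union_Ioi_eq_Ioi zero_le_one, integrableOn_union,
    integrableOn_Ioc_iff_integrableOn_Ioo]
  constructor
  · refine ((intervalIntegral.integrableOn_Ioo_rpow_iff zero_lt_one).2
      (by linarith : -1 < -s)).mono' hmeas.restrict ?_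
    filter_upwards [ae_restrict_mem measurableSet_Ioo] with t ht
    calc ‖(1 - exp (-t)) * t ^ (-s - 1)‖ ≤ t * t ^ (-s - 1) := by
          rw [hnorm t ht.1]
          exact mul_le_mul_of_nonneg_right (one_sub_exp_neg_le t) (rpow_nonneg ht.1.le _)
      _ = t ^ (-s) := by rw [rpow_sub_one ht.1.ne', mul_div_cancel₀ _ ht.1.ne']
  · refine (integrableOn_Ioi_rpow_of_lt (by linarith : -s - 1 < -1) zero_lt_one).mono'
      hmeas.restrict ?_
    filter_upwards [ae_restrict_mem measurableSet_Ioi] with t (ht : 1 < t)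
    calc ‖(1 - exp (-t)) * t ^ (-s - 1)‖ ≤ 1 * t ^ (-s - 1) := by
          rw [hnorm t (by linarith)]; gcongr; exact one_sub_exp_neg_le_one t
      _ = t ^ (-s - 1) := one_mul _

lemma integral_one_sub_exp_neg_mul_rpow (hs₀ : 0 < s) (hs₁ : s < 1) :
    ∫ t in Ioi (0 : ℝ), (1 - exp (-t)) * t ^ (-s - 1) = Gamma (1 - s) / s := by
  have hu : ∀ t ∈ Ioi (0 : ℝ), HasDerivAt (fun t ↦ 1 - exp (-t)) (exp (-t)) t := fun t _ ↦ by
    simpa using ((hasDerivAt_neg t).exp).const_sub 1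
  have hv : ∀ t ∈ Ioi (0 : ℝ), HasDerivAt (fun t ↦ -(t ^ (-s) / s)) (t ^ (-s - 1)) t :=
    fun t (ht : 0 < t) ↦ by
      refine ((hasDerivAt_rpow_const (p := -s) (Or.inl ht.ne')).div_const s).neg.congr_deriv ?_
      rw [neg_mul, neg_div, neg_neg, mul_div_cancel_left₀ _ hs₀.ne']
  have hΓ : IntegrableOn (fun t : ℝ ↦ exp (-t) * t ^ (-s)) (Ioi 0) := by
    simpa using GammaIntegral_convergent (by linarith : 0 < 1 - s)
  have hzero : Tendsto (fun t : ℝ ↦ (1 - exp (-t)) * -(t ^ (-s) / s)) (𝓝[>] 0) (𝓝 0) := by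
    have hpow : Tendsto (fun t : ℝ ↦ t ^ (1 - s) / s) (𝓝[>] 0) (𝓝 0) := by
      simpa [zero_rpow (by linarith : 1 - s ≠ 0)] using
        (((continuousAt_rpow_const 0 (1 - s) (Or.inr (by linarith))).tendsto).mono_left
          nhdsWithin_le_nhds).div_const s
    refine squeeze_zero_norm' ?_ hpow
    filter_upwards [self_mem_nhdsWithin] with t (ht : 0 < t)
    calc ‖(1 - exp (-t)) * -(t ^ (-s) / s)‖ = (1 - exp (-t)) * (t ^ (-s) / s) := by
          rw [norm_mul, norm_neg, norm_of_nonneg (one_sub_exp_neg_nonneg ht.le),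
            norm_of_nonneg (by positivity)]
      _ ≤ t * (t ^ (-s) / s) := by gcongr; exact one_sub_exp_neg_le t
      _ = t ^ (1 - s) / s := by rw [sub_eq_add_neg, rpow_add ht, rpow_one, mul_div_assoc]
  have hinfty : Tendsto (fun t : ℝ ↦ (1 - exp (-t)) * -(t ^ (-s) / s)) atTop (𝓝 0) := by
    simpa using (tendsto_const_nhds.sub tendsto_exp_neg_atTop_nhds_zero).mul
      ((tendsto_rpow_neg_atTop hs₀).div_const s).neg
  rw [integral_Ioi_mul_deriv_eq_deriv_mul hu hv (integrableOn_one_sub_exp_neg_mul_rpow hs₀ hs₁)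
    (IntegrableOn.congr_fun (hΓ.const_mul (-s⁻¹)) (fun t _ ↦ by simp only [Pi.mul_apply]; ring)
      measurableSet_Ioi) hzero hinfty]
  have hΓ_eq : ∀ t : ℝ, exp (-t) * -(t ^ (-s) / s) = -s⁻¹ * (exp (-t) * t ^ (1 - s - 1)) :=
    fun t ↦ by ring_nf
  simp_rw [hΓ_eq, integral_const_mul, ← Gamma_eq_integral (by linarith : 0 < 1 - s)]
  ring

lemma one_sub_exp_neg_mul_mul_rpow_eq {a t : ℝ} (ha : 0 < a) (ht : 0 ≤ t) :
    (1 - exp (-(a * t))) * t ^ (-s - 1) =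
      a ^ (s + 1) * ((1 - exp (-(a * t))) * (a * t) ^ (-s - 1)) := by
  have h : a ^ (s + 1) * a ^ (-s - 1) = 1 := by rw [← rpow_add ha]; norm_num
  rw [mul_rpow ha.le ht]
  linear_combination -((1 - exp (-(a * t))) * t ^ (-s - 1)) * h

lemma integrableOn_one_sub_exp_neg_mul_mul_rpow (hs₀ : 0 < s) (hs₁ : s < 1) {a : ℝ}
    (ha : 0 < a) :
    IntegrableOn (fun t : ℝ ↦ (1 - exp (-(a * t))) * t ^ (-s - 1)) (Ioi 0) := by
  have hscaled := (integrableOn_Ioi_comp_mul_left_iff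
    (fun t : ℝ ↦ (1 - exp (-t)) * t ^ (-s - 1)) 0 ha).2
    (by simpa using integrableOn_one_sub_exp_neg_mul_rpow hs₀ hs₁)
  exact IntegrableOn.congr_fun (hscaled.const_mul _)
    (fun t ht ↦ (one_sub_exp_neg_mul_mul_rpow_eq ha (le_of_lt ht)).symm) measurableSet_Ioi

lemma integral_one_sub_exp_neg_mul_mul_rpow (hs₀ : 0 < s) (hs₁ : s < 1) {a : ℝ}
    (ha : 0 < a) :
    ∫ t in Ioi (0 : ℝ), (1 - exp (-(a * t))) * t ^ (-s - 1) = a ^ s * (Gamma (1 - s) / s) := by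
  rw [setIntegral_congr_fun measurableSet_Ioi
      (fun t ht ↦ one_sub_exp_neg_mul_mul_rpow_eq ha (le_of_lt ht)), integral_const_mul,
    integral_comp_mul_left_Ioi (fun t : ℝ ↦ (1 - exp (-t)) * t ^ (-s - 1)) 0 ha, mul_zero,
    integral_one_sub_exp_neg_mul_rpow hs₀ hs₁, smul_eq_mul, rpow_add_one ha.ne']
  field_simp

end Kernel

section Radial

variable {p α a : ℝ}

-- The substitution `y = r ^ (-α)`, in the shape of `integral_comp_rpow_Ioi`.
lemma rpow_mul_one_sub_exp_neg_div_rpow_eq (hα : 0 < α) {r : ℝ} (hr : 0 < r) :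
    r ^ (p - 1) * (1 - exp (-(a / r ^ α))) = (|-α| * r ^ (-α - 1)) •
      (α⁻¹ * ((1 - exp (-(a * r ^ (-α)))) * (r ^ (-α)) ^ (-(p / α) - 1))) := by
  have hpow : r ^ (-α - 1) * (r ^ (-α)) ^ (-(p / α) - 1) = r ^ (p - 1) := by
    rw [← rpow_mul hr.le, ← rpow_add hr]
    congr 1
    field_simp
    ring
  rw [abs_neg, abs_of_pos hα, rpow_neg hr.le, ← div_eq_mul_inv, smul_eq_mul, ← rpow_neg hr.le,
    ← hpow]
  field_simp

lemma integrableOn_rpow_mul_one_sub_exp_neg_div_rpow (hp : 0 < p) (hpα : p < α) (ha : 0 < a) :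
    IntegrableOn (fun r : ℝ ↦ r ^ (p - 1) * (1 - exp (-(a / r ^ α)))) (Ioi 0) := by
  have hα : 0 < α := hp.trans hpα
  have hsub := (integrableOn_Ioi_comp_rpow_iff _ (neg_ne_zero.2 hα.ne')).2
    ((integrableOn_one_sub_exp_neg_mul_mul_rpow (s := p / α) (by positivity)
      ((div_lt_one hα).2 hpα) ha).const_mul α⁻¹)
  exact hsub.congr_fun (fun r hr ↦ (rpow_mul_one_sub_exp_neg_div_rpow_eq hα hr).symm)
    measurableSet_Ioi

lemma integral_rpow_mul_one_sub_exp_neg_div_rpow (hp : 0 < p) (hpα : p < α) (ha : 0 < a) :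
    ∫ r in Ioi (0 : ℝ), r ^ (p - 1) * (1 - exp (-(a / r ^ α))) =
      a ^ (p / α) * Gamma (1 - p / α) / p := by
  have hα : 0 < α := hp.trans hpα
  rw [setIntegral_congr_fun measurableSet_Ioi
      (fun r hr ↦ rpow_mul_one_sub_exp_neg_div_rpow_eq hα hr),
    integral_comp_rpow_Ioi (fun y ↦ α⁻¹ * ((1 - exp (-(a * y))) * y ^ (-(p / α) - 1)))
      (neg_ne_zero.2 hα.ne'), integral_const_mul,
    integral_one_sub_exp_neg_mul_mul_rpow (by positivity) ((div_lt_one hα).2 hpα) ha]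
  field_simp

end Radial

lemma integrable_prod_of_nonneg {X Y : Type*} [MeasurableSpace X] [MeasurableSpace Y]
    {μ : Measure X} {ν : Measure Y} [SFinite μ] [SFinite ν] {f : X × Y → ℝ}
    (hf : ∀ᵐ y ∂ν, ∀ x, 0 ≤ f (x, y)) (hmeas : AEStronglyMeasurable f (μ.prod ν))
    (hslice : ∀ᵐ y ∂ν, Integrable (fun x ↦ f (x, y)) μ)
    (hint : Integrable (fun y ↦ ∫ x, f (x, y) ∂μ) ν) : Integrable f (μ.prod ν) :=
  (integrable_prod_iff' hmeas).2 ⟨hslice, hint.congr <| hf.mono fun y hy ↦ by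
    simp only [Real.norm_of_nonneg (hy _)]⟩

section NormedSpace

variable {E : Type*} [NormedAddCommGroup E] [NormedSpace ℝ E] [FiniteDimensional ℝ E]
  [MeasurableSpace E] [BorelSpace E] [Nontrivial E] (μ : Measure E) [μ.IsAddHaarMeasure]
  {α a : ℝ}

lemma integrable_one_sub_exp_neg_div_norm_rpow (hα : (finrank ℝ E : ℝ) < α) (ha : 0 < a) :
    Integrable (fun x : E ↦ 1 - exp (-(a / ‖x‖ ^ α))) μ := by
  rw [integrable_fun_norm_addHaar μ (f := fun r ↦ 1 - exp (-(a / r ^ α)))]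
  simpa only [smul_eq_mul, ← rpow_natCast, Nat.cast_pred finrank_pos] using
    integrableOn_rpow_mul_one_sub_exp_neg_div_rpow (by exact_mod_cast finrank_pos) hα ha

lemma integral_one_sub_exp_neg_div_norm_rpow (hα : (finrank ℝ E : ℝ) < α) (ha : 0 < a) :
    ∫ x, (1 - exp (-(a / ‖x‖ ^ α))) ∂μ =
      μ.real (Metric.ball 0 1) * a ^ ((finrank ℝ E : ℝ) / α) *
        Gamma (1 - (finrank ℝ E : ℝ) / α) := by
  have hn : (0 : ℝ) < finrank ℝ E := by exact_mod_cast finrank_pos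
  rw [integral_fun_norm_addHaar μ (fun r ↦ 1 - exp (-(a / r ^ α)))]
  simp only [nsmul_eq_mul, smul_eq_mul, ← rpow_natCast, Nat.cast_pred finrank_pos]
  rw [integral_rpow_mul_one_sub_exp_neg_div_rpow hn hα ha]
  field_simp

variable {β c : ℝ}

lemma integral_pareto_connection_slice (hα : (finrank ℝ E : ℝ) < α) (hc : 0 < c) {w : ℝ}
    (hw : 0 < w) :
    ∫ x, (1 - exp (-(c * w / ‖x‖ ^ α))) * (β * w ^ (-β - 1)) ∂μ =
      μ.real (Metric.ball 0 1) * c ^ ((finrank ℝ E : ℝ) / α) *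
        Gamma (1 - (finrank ℝ E : ℝ) / α) * β * w ^ ((finrank ℝ E : ℝ) / α - β - 1) := by
  rw [integral_mul_const, integral_one_sub_exp_neg_div_norm_rpow μ hα (mul_pos hc hw),
    mul_rpow hc.le hw.le, sub_sub, sub_eq_add_neg _ (β + 1), rpow_add hw, neg_add']
  ring

lemma integrable_pareto_connection (hα : (finrank ℝ E : ℝ) < α)
    (hβ : (finrank ℝ E : ℝ) / α < β) (hc : 0 < c) :
    Integrable (Function.uncurry fun (x : E) (w : ℝ) ↦
      (1 - exp (-(c * w / ‖x‖ ^ α))) * (β * w ^ (-β - 1)))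
      (μ.prod (volume.restrict (Ioi 1))) := by
  have hn : (0 : ℝ) < finrank ℝ E := by exact_mod_cast finrank_pos
  have hβ₀ : 0 < β := (div_pos hn (hn.trans hα)).trans hβ
  refine integrable_prod_of_nonneg ?_ (by fun_prop) ?_ ?_
  · filter_upwards [ae_restrict_mem measurableSet_Ioi] with w (hw : 1 < w) x
    exact mul_nonneg (one_sub_exp_neg_nonneg (div_nonneg (by nlinarith) (by positivity)))
      (mul_nonneg hβ₀.le (rpow_nonneg (by linarith) _))
  · filter_upwards [ae_restrict_mem measurableSet_Ioi] with w (hw : 1 < w)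
    exact (integrable_one_sub_exp_neg_div_norm_rpow μ hα
      (mul_pos hc (zero_lt_one.trans hw))).mul_const (β * w ^ (-β - 1))
  · exact IntegrableOn.congr_fun
      ((integrableOn_Ioi_rpow_of_lt (by linarith) one_pos).const_mul _)
      (fun w hw ↦ (integral_pareto_connection_slice μ hα hc (zero_lt_one.trans hw)).symm)
      measurableSet_Ioi

lemma integral_pareto_connection (hα : (finrank ℝ E : ℝ) < α)
    (hβ : (finrank ℝ E : ℝ) / α < β) (hc : 0 < c) :
    ∫ x, (∫ w in Ioi (1 : ℝ), (1 - exp (-(c * w / ‖x‖ ^ α))) * (β * w ^ (-β - 1))) ∂μ =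
      μ.real (Metric.ball 0 1) * c ^ ((finrank ℝ E : ℝ) / α) *
        Gamma (1 - (finrank ℝ E : ℝ) / α) * (β / (β - finrank ℝ E / α)) := by
  rw [integral_integral_swap (integrable_pareto_connection μ hα hβ hc),
    setIntegral_congr_fun measurableSet_Ioi
      (fun w hw ↦ integral_pareto_connection_slice μ hα hc (zero_lt_one.trans hw)),
    integral_const_mul, integral_Ioi_rpow_of_lt (by linarith) one_pos, one_rpow,
    show (finrank ℝ E : ℝ) / α - β - 1 + 1 = -(β - finrank ℝ E / α) by ring, div_neg, neg_div,
    neg_neg]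
  ring

end NormedSpace

theorem integral_pareto_connection_function_general
    (d : ℕ) (hd : 1 ≤ d) (α β c : ℝ)
    (hc : 0 < c)
    (hαd : (d : ℝ) < α) (hαβ : (d : ℝ) < α * β) :
    ∫ x : EuclideanSpace ℝ (Fin d),
        ∫ w in Ioi (1 : ℝ), (1 - Real.exp (-(c * w / ‖x‖ ^ α))) * (β * w ^ (-β - 1)) =
      (volume (Metric.closedBall (0 : EuclideanSpace ℝ (Fin d)) 1)).toReal *
        (α * β / (α * β - d)) * c ^ ((d : ℝ) / α) * Real.Gamma (1 - (d : ℝ) / α) := by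
  have : Nonempty (Fin d) := ⟨⟨0, hd⟩⟩
  have hdim : (finrank ℝ (EuclideanSpace ℝ (Fin d)) : ℝ) = d := by
    rw [finrank_euclideanSpace_fin]
  have hα : 0 < α := (Nat.cast_pos.2 hd).trans hαd
  have hβ : (d : ℝ) / α < β := (div_lt_iff₀ hα).2 (by linarith)
  have hratio : β / (β - d / α) = α * β / (α * β - d) := by
    rw [← mul_div_mul_left β _ hα.ne', mul_sub, mul_div_cancel₀ _ hα.ne']
  rw [integral_pareto_connection volume (hdim ▸ hαd) (hdim ▸ hβ) hc, hdim, hratio,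
    Measure.addHaar_closedBall_eq_addHaar_ball, measureReal_def]
  ring

theorem integral_pareto_connection_function
    (d : ℕ) (hd : 1 ≤ d) (α β c : ℝ)
    (hα : 0 < α) (hβ : 0 < β) (hc : 0 < c)
    (hαd : (d : ℝ) < α) (hαβ : (d : ℝ) < α * β) :
    ∫ x : EuclideanSpace ℝ (Fin d),
        ∫ w in Ioi (1 : ℝ), (1 - Real.exp (-(c * w / ‖x‖ ^ α))) * (β * w ^ (-β - 1)) =
      (volume (Metric.closedBall (0 : EuclideanSpace ℝ (Fin d)) 1)).toReal *
        (α * β / (α * β - d)) * c ^ ((d : ℝ) / α) * Real.Gamma (1 - (d : ℝ) / α) :=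
  integral_pareto_connection_function_general d hd α β c hc hαd hαβ
end

section
/- Let d ≥ 1 be an integer and let α > d and c > 0 be reals. Then ∫_{ℝ^d} (1 − exp(−c / ‖x‖^α)) dx = θ_d · c^{d/α} · Γ(1 − d/α); in particular this integral is finite. -/
open MeasureTheory Set

theorem integral_connection_function
    (d : ℕ) (hd : 1 ≤ d) (α c : ℝ) (hαd : (d : ℝ) < α) (hc : 0 < c) :
    Integrable (fun x : EuclideanSpace ℝ (Fin d) => 1 - Real.exp (-(c / ‖x‖ ^ α))) ∧
    ∫ x : EuclideanSpace ℝ (Fin d), (1 - Real.exp (-(c / ‖x‖ ^ α))) =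
      (volume (Metric.closedBall (0 : EuclideanSpace ℝ (Fin d)) 1)).toReal *
        c ^ ((d : ℝ) / α) * Real.Gamma (1 - (d : ℝ) / α) := by
  set E := EuclideanSpace ℝ (Fin d) with hE
  have hd0 : (0:ℝ) < d := by exact_mod_cast hd
  have hα : (0:ℝ) < α := hd0.trans hαd
  set s : ℝ := (d:ℝ)/α with hs_def
  have hs0 : 0 < s := div_pos hd0 hα
  have hs1 : s < 1 := (div_lt_one hα).2 hαd
  haveI : Nontrivial E := by
    apply Module.nontrivial_of_finrank_pos (R := ℝ)
    have h : Module.finrank ℝ E = d := finrank_euclideanSpace_fin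
    omega
  set f : E → ℝ := fun x => 1 - Real.exp (-(c / ‖x‖ ^ α)) with hf_def
  have hu_nonneg : ∀ x : E, 0 ≤ c / ‖x‖ ^ α := fun x =>
    div_nonneg hc.le (Real.rpow_nonneg (norm_nonneg x) α)
  have hf_nonneg : ∀ x, 0 ≤ f x := by
    intro x
    simp only [hf_def, sub_nonneg]
    exact Real.exp_le_one_iff.2 (neg_nonpos.2 (hu_nonneg x))
  -- the layer-cake representation
  set F : E → ℝ → ENNReal := fun x t =>
    (Ioo 0 (c / ‖x‖ ^ α)).indicator (fun t => ENNReal.ofReal (Real.exp (-t))) t with hF_def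
  have hmeas_g : Measurable fun x : E => c / ‖x‖ ^ α := by
    exact measurable_const.div (((Real.continuous_rpow_const hα.le).comp continuous_norm).measurable)
  have hF_meas : Measurable (Function.uncurry F) := by
    have : Function.uncurry F = fun p : E × ℝ =>
        ({p : E × ℝ | 0 < p.2 ∧ p.2 < c / ‖p.1‖ ^ α}).indicator
          (fun p => ENNReal.ofReal (Real.exp (-p.2))) p := by
      funext p
      simp only [Function.uncurry, hF_def, indicator, mem_Ioo, mem_setOf_eq]
    rw [this]
    apply Measurable.indicator
    · exact (ENNReal.measurable_ofReal.comp (Real.measurable_exp.comp measurable_snd.neg))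
    · exact MeasurableSet.inter (measurableSet_lt measurable_const measurable_snd)
        (measurableSet_lt measurable_snd (hmeas_g.comp measurable_fst))
  -- pointwise identity
  have hpt : ∀ x : E, ENNReal.ofReal (f x) = ∫⁻ t in Ioi (0:ℝ), F x t := by
    intro x
    set u := c / ‖x‖ ^ α with hu
    have hu0 : 0 ≤ u := hu_nonneg x
    have : ∫⁻ t in Ioi (0:ℝ), F x t = ∫⁻ t in Ioo 0 u, ENNReal.ofReal (Real.exp (-t)) := by
      rw [hF_def]
      rw [lintegral_indicator measurableSet_Ioo, Measure.restrict_restrict measurableSet_Ioo]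
      congr 1
      rw [inter_eq_left.2 (Ioo_subset_Ioi_self)]
    rw [this, ← ofReal_integral_eq_lintegral_ofReal]
    · congr 1
      rw [← integral_Ioc_eq_integral_Ioo, ← intervalIntegral.integral_of_le hu0]
      rw [show (fun t => Real.exp (-t)) = fun t => Real.exp (-t) from rfl]
      rw [intervalIntegral.integral_comp_neg (fun t => Real.exp t)]
      rw [integral_exp]
      simp [hf_def, hu]
    · exact ((Real.continuous_exp.comp continuous_neg).integrableOn_Icc).mono_set Ioo_subset_Icc_self
    · exact Filter.Eventually.of_forall fun t => (Real.exp_pos _).le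
  -- Tonelli
  have hswap : ∫⁻ x, ENNReal.ofReal (f x) =
      ∫⁻ t in Ioi (0:ℝ), ∫⁻ x : E, F x t := by
    calc ∫⁻ x, ENNReal.ofReal (f x) = ∫⁻ x, ∫⁻ t in Ioi (0:ℝ), F x t := by
          exact lintegral_congr fun x => hpt x
      _ = ∫⁻ t in Ioi (0:ℝ), ∫⁻ x : E, F x t := by
          exact lintegral_lintegral_swap (hF_meas.aemeasurable)
  set B : ENNReal := volume (Metric.ball (0:E) 1) with hB
  -- inner integral for fixed t > 0
  have hinner : ∀ t : ℝ, 0 < t → ∫⁻ x : E, F x t =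
      ENNReal.ofReal (Real.exp (-t)) * (ENNReal.ofReal (((c/t) ^ α⁻¹) ^ d) * B) := by
    intro t ht
    set r : ℝ := (c/t) ^ α⁻¹ with hr
    have hr0 : 0 ≤ r := Real.rpow_nonneg (div_nonneg hc.le ht.le) _
    have hset : {x : E | t < c / ‖x‖ ^ α} = Metric.ball (0:E) r \ {0} := by
      ext x
      simp only [mem_setOf_eq, mem_diff, Metric.mem_ball, dist_zero_right, mem_singleton_iff]
      constructor
      · intro h
        have hx0 : x ≠ 0 := by
          rintro rfl
          rw [norm_zero, Real.zero_rpow hα.ne', div_zero] at h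
          exact absurd h (not_lt.2 ht.le)
        have hxn : 0 < ‖x‖ := norm_pos_iff.2 hx0
        have hxα : 0 < ‖x‖ ^ α := Real.rpow_pos_of_pos hxn α
        have h1 : ‖x‖ ^ α < c / t := by
          rw [lt_div_iff₀ ht]
          rw [lt_div_iff₀ hxα] at h
          linarith [h]
        refine ⟨?_, hx0⟩
        rw [hr]
        exact (Real.lt_rpow_inv_iff_of_pos (norm_nonneg x) (div_nonneg hc.le ht.le) hα).2 h1
      · rintro ⟨hlt, hx0⟩
        have hxn : 0 < ‖x‖ := norm_pos_iff.2 hx0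
        have hxα : 0 < ‖x‖ ^ α := Real.rpow_pos_of_pos hxn α
        have h1 : ‖x‖ ^ α < c / t :=
          (Real.lt_rpow_inv_iff_of_pos (norm_nonneg x) (div_nonneg hc.le ht.le) hα).1 hlt
        rw [lt_div_iff₀ hxα]
        rw [lt_div_iff₀ ht] at h1
        linarith [h1]
    have hmsr : MeasurableSet {x : E | t < c / ‖x‖ ^ α} :=
      measurableSet_lt measurable_const hmeas_g
    have hFx : ∀ x : E, F x t = ({x : E | t < c / ‖x‖ ^ α}).indicator
        (fun _ => ENNReal.ofReal (Real.exp (-t))) x := by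
      intro x
      simp only [hF_def, indicator, mem_Ioo, mem_setOf_eq, ht, true_and]
    rw [lintegral_congr hFx, lintegral_indicator_const hmsr, hset]
    rw [measure_diff_null (measure_singleton _)]
    rw [Measure.addHaar_ball _ _ hr0]
    have hfr : Module.finrank ℝ E = d := finrank_euclideanSpace_fin
    rw [hfr]
  -- simplify the inner value for t > 0
  have hpow : ∀ t : ℝ, 0 < t →
      ENNReal.ofReal (((c/t) ^ α⁻¹) ^ d) = ENNReal.ofReal (c ^ s * t ^ (-s)) := by
    intro t ht
    congr 1
    have h1 : ((c/t) ^ α⁻¹ : ℝ) ^ d = ((c/t) ^ α⁻¹ : ℝ) ^ (d : ℝ) :=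
      (Real.rpow_natCast _ d).symm
    rw [h1, ← Real.rpow_mul (div_nonneg hc.le ht.le)]
    have h2 : α⁻¹ * (d : ℝ) = s := by
      rw [hs_def]; field_simp
    rw [h2, Real.div_rpow hc.le ht.le, Real.rpow_neg ht.le, div_eq_mul_inv]
  -- compute the t-integral
  have hΓ : (0:ℝ) < 1 - s := by linarith
  have hGammaInt : ∫⁻ t in Ioi (0:ℝ), ENNReal.ofReal (Real.exp (-t) * t ^ (-s)) =
      ENNReal.ofReal (Real.Gamma (1 - s)) := by
    have hexp : ∀ t : ℝ, Real.exp (-t) * t ^ (-s) = Real.exp (-t) * t ^ ((1 - s) - 1) := by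
      intro t; congr 1; ring_nf
    have hint : IntegrableOn (fun t : ℝ => Real.exp (-t) * t ^ (-s)) (Ioi 0) := by
      have := Real.GammaIntegral_convergent hΓ
      simpa [hexp] using this
    rw [← ofReal_integral_eq_lintegral_ofReal hint]
    · congr 1
      rw [Real.Gamma_eq_integral hΓ]
      exact (integral_congr_ae (Filter.Eventually.of_forall fun t => (hexp t))).symm ▸ rfl
    · filter_upwards [ae_restrict_mem measurableSet_Ioi] with t ht
      exact mul_nonneg (Real.exp_pos _).le (Real.rpow_nonneg (le_of_lt ht) _)
  -- assemble
  have hexp_meas : Measurable fun t : ℝ => ENNReal.ofReal (Real.exp (-t) * t ^ (-s)) := by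
    fun_prop
  have hL : ∫⁻ x, ENNReal.ofReal (f x) =
      ENNReal.ofReal (c ^ s) * B * ENNReal.ofReal (Real.Gamma (1 - s)) := by
    rw [hswap]
    have heq : ∀ᵐ t ∂(volume.restrict (Ioi (0:ℝ))),
        (∫⁻ x : E, F x t) =
          (ENNReal.ofReal (c ^ s) * B) * ENNReal.ofReal (Real.exp (-t) * t ^ (-s)) := by
      filter_upwards [ae_restrict_mem measurableSet_Ioi] with t ht
      rw [hinner t ht, hpow t ht]
      rw [ENNReal.ofReal_mul (Real.rpow_nonneg hc.le _),
        ENNReal.ofReal_mul (Real.exp_pos _).le]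
      ring
    rw [lintegral_congr_ae heq, lintegral_const_mul' _ _ (ENNReal.mul_ne_top ENNReal.ofReal_ne_top measure_ball_lt_top.ne), hGammaInt]
  have hf_meas : Measurable f := by
    rw [hf_def]
    exact measurable_const.sub (Real.measurable_exp.comp hmeas_g.neg)
  have hInt : Integrable f := by
    refine ⟨hf_meas.aestronglyMeasurable, ?_⟩
    rw [hasFiniteIntegral_iff_ofReal (Filter.Eventually.of_forall hf_nonneg), hL]
    have hBfin : B ≠ ⊤ := measure_ball_lt_top.ne
    finiteness
  refine ⟨hInt, ?_⟩
  have hval : ∫ x : E, f x = (∫⁻ x, ENNReal.ofReal (f x)).toReal := by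
    rw [integral_eq_lintegral_of_nonneg_ae (Filter.Eventually.of_forall hf_nonneg)
      hf_meas.aestronglyMeasurable]
  rw [show (fun x : E => 1 - Real.exp (-(c / ‖x‖ ^ α))) = f from rfl] at *
  rw [hval, hL, ENNReal.toReal_mul, ENNReal.toReal_mul,
    ENNReal.toReal_ofReal (Real.rpow_nonneg hc.le _),
    ENNReal.toReal_ofReal (Real.Gamma_pos_of_pos hΓ).le,
    Measure.addHaar_closedBall_eq_addHaar_ball]
  rw [hB, hs_def]
  ring
end
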